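/- arXiv:2311.14364 — 2 statements merged into one kernel-verified Lean document; each statement's English description precedes it below -/
import Mathlib

section
/- Let f : X → ℝ be a filter on a Lefschetz complex, let α₁ ∈ BD(f) be the birth-death pair whose birth-giving cell has maximal filter value among all birth-giving cells of pairs in BD(f), and let ω₁ ∈ BD(f) be the pair whose death-giving cell has minimal filter value. Let ψ ∈ BD(f) with ψ ≠ α₁ and ψ ≠ ω₁, and let γ ∈ BD(f) be a shallow pair with γ ≠ ψ. If γ ≠ α₁, then the cancellation of γ preserves the boundary entry ∂(b_{α₁}, d_ψ), i.e., the quotient boundary map satisfies ∂'(b_{α₁}, d_ψ) = ∂(b_{α₁}, d_ψ); if γ ≠ ω₁, then the cancellation of γ preserves ∂(b_ψ, d_{ω₁}). -/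
attribute [local instance] Classical.propDecidable

/-- A Lefschetz complex over an ambient finite type `C` of potential cells:
a finite set `cells` of cells, a dimension function, and a mod-2 incidence
function `bd` supported on `cells`, with `bd x y ≠ 0` only if
`dim y = dim x + 1`, and `∂∘∂ = 0` mod 2. -/
structure LC (C : Type) [Fintype C] [DecidableEq C] : Type where
  cells : Finset C
  dim : C → ℤ
  bd : C → C → ZMod 2
  bd_mem : ∀ x y, bd x y ≠ 0 → x ∈ cells ∧ y ∈ cells
  bd_dim : ∀ x y, bd x y ≠ 0 → dim y = dim x + 1
  bd_sq : ∀ x z, ∑ y, bd x y * bd y z = 0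

variable {C : Type} [Fintype C] [DecidableEq C]

/-- A filter on a Lefschetz complex: injective on the cells, and increasing
along the facet relation. -/
def IsFilter (L : LC C) (f : C → ℝ) : Prop :=
  (∀ x ∈ L.cells, ∀ y ∈ L.cells, f x = f y → x = y) ∧
  ∀ x y, L.bd x y ≠ 0 → f x < f y

lemma LC.bd_self (L : LC C) (a : C) : L.bd a a = 0 := by
  by_contra h
  have := L.bd_dim a a h
  omega

/-- The boundary map of the quotient after canceling `(s,t)`:
`∂'(x,y) = ∂(x,y) + ∂(s,y)·∂(x,t)` on the remaining cells, `0` elsewhere. -/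
def cancelBd (L : LC C) (s t : C) : C → C → ZMod 2 := fun x y =>
  if x ∈ L.cells \ {s, t} ∧ y ∈ L.cells \ {s, t} then
    L.bd x y + L.bd s y * L.bd x t
  else 0

private lemma zmod2_add_self : ∀ a : ZMod 2, a + a = 0 := by decide

/-- The quotient Lefschetz complex after canceling the facet-cofacet pair `(s,t)`. -/
noncomputable def cancel (L : LC C) (s t : C) : LC C :=
  if hst : L.bd s t = 1 then
    { cells := L.cells \ {s, t}
      dim := L.dim
      bd := cancelBd L s t
      bd_mem := by
        intro x y h
        unfold cancelBd at h
        split_ifs at h with hc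
        · exact hc
        · exact absurd rfl h
      bd_dim := by
        intro x y h
        unfold cancelBd at h
        split_ifs at h with hc
        · by_cases hxy : L.bd x y = 0
          · rw [hxy, zero_add] at h
            have h1 : L.bd s y ≠ 0 := fun hz => by simp [hz] at h
            have h2 : L.bd x t ≠ 0 := fun hz => by simp [hz] at h
            have d1 := L.bd_dim s y h1
            have d2 := L.bd_dim x t h2
            have d3 := L.bd_dim s t (by simp [hst])
            omega
          · exact L.bd_dim x y hxy
        · exact absurd rfl h
      bd_sq := by
        intro x z
        by_cases hx : x ∈ L.cells \ {s, t}
        swap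
        · refine Finset.sum_eq_zero fun y _ => ?_
          unfold cancelBd
          rw [if_neg (fun hc => hx hc.1), zero_mul]
        by_cases hz : z ∈ L.cells \ {s, t}
        swap
        · refine Finset.sum_eq_zero fun y _ => ?_
          have h0 : cancelBd L s t y z = 0 := by
            unfold cancelBd; rw [if_neg (fun hc => hz hc.2)]
          rw [h0, mul_zero]
        have key : ∀ y, cancelBd L s t x y * cancelBd L s t y z =
            (L.bd x y + L.bd s y * L.bd x t) * (L.bd y z + L.bd s z * L.bd y t) := by
          intro y
          by_cases hy : y ∈ L.cells \ {s, t}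
          · unfold cancelBd
            rw [if_pos ⟨hx, hy⟩, if_pos ⟨hy, hz⟩]
          · have lhs0 : cancelBd L s t x y = 0 := by
              unfold cancelBd; rw [if_neg (fun hc => hy hc.2)]
            rw [lhs0, zero_mul]
            by_cases hyc : y ∈ L.cells
            · have hyst : y = s ∨ y = t := by
                simp only [Finset.mem_sdiff, Finset.mem_insert, Finset.mem_singleton] at hy
                tauto
              rcases hyst with rfl | rfl
              · simp [L.bd_self, hst, zmod2_add_self]
              · simp [L.bd_self, hst, zmod2_add_self]
            · have b1 : L.bd x y = 0 := by
                by_contra hb; exact hyc (L.bd_mem x y hb).2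
              have b2 : L.bd s y = 0 := by
                by_contra hb; exact hyc (L.bd_mem s y hb).2
              have b3 : L.bd y z = 0 := by
                by_contra hb; exact hyc (L.bd_mem y z hb).1
              have b4 : L.bd y t = 0 := by
                by_contra hb; exact hyc (L.bd_mem y t hb).1
              rw [b1, b2, b3, b4]
              ring
        rw [Finset.sum_congr rfl fun y _ => key y]
        have expand : ∀ y : C,
            (L.bd x y + L.bd s y * L.bd x t) * (L.bd y z + L.bd s z * L.bd y t) =
            L.bd x y * L.bd y z + L.bd s z * (L.bd x y * L.bd y t)
              + L.bd x t * (L.bd s y * L.bd y z)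
              + L.bd x t * L.bd s z * (L.bd s y * L.bd y t) := by
          intro y; ring
        rw [Finset.sum_congr rfl fun y _ => expand y]
        simp only [Finset.sum_add_distrib, ← Finset.mul_sum, L.bd_sq, mul_zero,
          add_zero, zero_add] }
  else L

/-- The boundary operator on mod-2 chains. -/
noncomputable def bdOp (L : LC C) : (C → ZMod 2) →ₗ[ZMod 2] (C → ZMod 2) where
  toFun c := fun x => ∑ y, L.bd x y * c y
  map_add' a b := by
    funext x
    simp [mul_add, Finset.sum_add_distrib]
  map_smul' m a := by
    funext x
    simp only [Pi.smul_apply, smul_eq_mul, RingHom.id_apply]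
    rw [Finset.mul_sum]
    exact Finset.sum_congr rfl fun y _ => by ring

/-- The `p`-chains of a Lefschetz complex: mod-2 chains supported on cells of
dimension `p`. -/
def chains (L : LC C) (p : ℤ) : Submodule (ZMod 2) (C → ZMod 2) where
  carrier := {c | ∀ x, c x ≠ 0 → x ∈ L.cells ∧ L.dim x = p}
  zero_mem' := by intro x hx; simp at hx
  add_mem' := by
    intro a b ha hb x hx
    by_cases h1 : a x = 0
    · refine hb x fun h2 => hx ?_
      show a x + b x = 0
      rw [h1, h2, add_zero]
    · exact ha x h1
  smul_mem' := by
    intro m c hc x hx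
    refine hc x fun h0 => hx ?_
    show m * c x = 0
    rw [h0, mul_zero]

/-- The `p`-cycles. -/
noncomputable def cycles (L : LC C) (p : ℤ) : Submodule (ZMod 2) (C → ZMod 2) :=
  chains L p ⊓ LinearMap.ker (bdOp L)

/-- The `p`-boundaries. -/
noncomputable def boundaries (L : LC C) (p : ℤ) : Submodule (ZMod 2) (C → ZMod 2) :=
  Submodule.map (bdOp L) (chains L (p + 1))

/-- The mod-2 homology of a Lefschetz complex in dimension `p`. -/
noncomputable def homology (L : LC C) (p : ℤ) : Type :=
  cycles L p ⧸ (Submodule.comap (cycles L p).subtype (boundaries L p))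

noncomputable instance (L : LC C) (p : ℤ) : AddCommGroup (homology L p) :=
  inferInstanceAs (AddCommGroup (cycles L p ⧸
    Submodule.comap (cycles L p).subtype (boundaries L p)))

noncomputable instance (L : LC C) (p : ℤ) : Module (ZMod 2) (homology L p) :=
  inferInstanceAs (Module (ZMod 2) (cycles L p ⧸
    Submodule.comap (cycles L p).subtype (boundaries L p)))

/-- The boundary of the cell `y`, as a chain. -/
def col (L : LC C) (y : C) : C → ZMod 2 := fun x => L.bd x y

/-- The chain `v` is the boundary of a chain supported on cells with filter
value `< b`. -/
def IsBdryBelow (L : LC C) (f : C → ℝ) (b : ℝ) (v : C → ZMod 2) : Prop :=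
  ∃ c : C → ZMod 2, (∀ z, c z ≠ 0 → z ∈ L.cells ∧ f z < b) ∧ bdOp L c = v

/-- The cell `y` gives death: `[∂y] ≠ 0` in the homology of the sublevel set
strictly below `f y`. -/
def givesDeath (L : LC C) (f : C → ℝ) (y : C) : Prop :=
  y ∈ L.cells ∧ ¬ IsBdryBelow L f (f y) (col L y)

/-- The cell `y` gives birth: `[∂y] = 0` in the homology of the sublevel set
strictly below `f y`. -/
def givesBirth (L : LC C) (f : C → ℝ) (y : C) : Prop :=
  y ∈ L.cells ∧ IsBdryBelow L f (f y) (col L y)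

/-- The unique chain supported on death-giving cells below `y` whose boundary
is `∂y` (for birth-giving `y`); junk value otherwise. -/
noncomputable def canChain (L : LC C) (f : C → ℝ) (y : C) : C → ZMod 2 :=
  if h : ∃ c : C → ZMod 2,
      (∀ z, c z ≠ 0 → f z < f y ∧ givesDeath L f z) ∧ bdOp L c = col L y
  then h.choose else 0

/-- The canonical cycle `d_y = y + c_y` of a birth-giving cell `y`. -/
noncomputable def canCycle (L : LC C) (f : C → ℝ) (y : C) : C → ZMod 2 :=
  Pi.single y 1 + canChain L f y

/-- `v` and `w` are homologous in the sublevel complex strictly below `b`. -/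
def HomBelow (L : LC C) (f : C → ℝ) (b : ℝ) (v w : C → ZMod 2) : Prop :=
  ∃ c : C → ZMod 2, (∀ z, c z ≠ 0 → z ∈ L.cells ∧ f z < b) ∧ bdOp L c = v + w

/-- Sorting a finset of cells by increasing filter value (fueled recursion). -/
noncomputable def sortAux (f : C → ℝ) : ℕ → Finset C → List C
  | 0, _ => []
  | n + 1, S =>
    if h : S.Nonempty then
      let m := (Finset.exists_min_image S f h).choose
      m :: sortAux f n (S.erase m)
    else []

/-- The cells of `L` listed in increasing order of filter value. -/
noncomputable def sortedCells (L : LC C) (f : C → ℝ) : List C :=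
  sortAux f L.cells.card L.cells

/-- An element of `S` maximizing `f`, with default value. -/
noncomputable def maxCellD (f : C → ℝ) (S : Finset C) (dflt : C) : C :=
  if h : S.Nonempty then (Finset.exists_max_image S f h).choose else dflt

/-- One step of the persistence pairing algorithm: the state is the pair
(unpaired birth-giving cells, birth-death pairs found so far), and `y` is the
next cell in the filter order.  If `y` gives birth it is added to the unpaired
set; if `y` gives death, the unique subset `A` of the unpaired cells whose
canonical cycles sum to a cycle homologous to `∂y` below `y` is found, and `y`
is paired with the cell of `A` of maximal filter value. -/
noncomputable def pairStep (L : LC C) (f : C → ℝ) (st : Finset C × Finset (C × C))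
    (y : C) : Finset C × Finset (C × C) :=
  if givesBirth L f y then (insert y st.1, st.2)
  else
    let A : Finset C :=
      if h : ∃! A : Finset C, A ⊆ st.1 ∧
          HomBelow L f (f y) (∑ x ∈ A, canCycle L f x) (col L y)
      then h.exists.choose else ∅
    let s := maxCellD f A y
    (st.1.erase s, insert (s, y) st.2)

/-- The state of the persistence pairing after processing all cells. -/
noncomputable def pairState (L : LC C) (f : C → ℝ) : Finset C × Finset (C × C) :=
  (sortedCells L f).foldl (pairStep L f) (∅, ∅)

/-- The birth-death pairs `BD(f)` of the filter `f`. -/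
noncomputable def BD (L : LC C) (f : C → ℝ) : Finset (C × C) :=
  (pairState L f).2

/-- The state of the persistence pairing after processing the cells with
filter value `< b`. -/
noncomputable def stateBelow (L : LC C) (f : C → ℝ) (b : ℝ) :
    Finset C × Finset (C × C) :=
  ((sortedCells L f).filter (fun x => decide (f x < b))).foldl (pairStep L f) (∅, ∅)

/-- The birth-giving cells with value `< b` that are unpaired by the
persistence pairing restricted to the sublevel set below `b`. -/
noncomputable def unpairedBelow (L : LC C) (f : C → ℝ) (b : ℝ) : Finset C :=
  (stateBelow L f b).1

/-- `(s,t)` is a shallow pair: `s` is the facet of `t` with maximal filter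
value and `t` is the cofacet of `s` with minimal filter value. -/
def IsShallow (L : LC C) (f : C → ℝ) (s t : C) : Prop :=
  L.bd s t = 1 ∧ (∀ x, L.bd x t ≠ 0 → f x ≤ f s) ∧ (∀ y, L.bd s y ≠ 0 → f t ≤ f y)

/-- Cancel a list of pairs in sequence. -/
noncomputable def cancelList : LC C → List (C × C) → LC C
  | L, [] => L
  | L, p :: ps => cancelList (cancel L p.1 p.2) ps

/-- The quotient after canceling the first `k` pairs of the sequence `Φ`. -/
noncomputable def quotAt (L : LC C) {n : ℕ} (Φ : Fin n → C × C) (k : ℕ) : LC C :=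
  cancelList L ((List.ofFn Φ).take k)

/-- `Φ` is a shallow order: an enumeration of the birth-death pairs of `f`
such that each pair is shallow for the quotient obtained by canceling all
preceding pairs. -/
def IsShallowOrder (L : LC C) (f : C → ℝ) {n : ℕ} (Φ : Fin n → C × C) : Prop :=
  Function.Injective Φ ∧ (∀ i, Φ i ∈ BD L f) ∧
  ∀ i : Fin n, IsShallow (quotAt L Φ i) f (Φ i).1 (Φ i).2

/-- The depth poset: the intersection of the strict total orders induced on
`BD(f)` by all shallow orders. -/
def DepthRel (L : LC C) (f : C → ℝ) (φ ψ : C × C) : Prop :=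
  φ ∈ BD L f ∧ ψ ∈ BD L f ∧
  ∀ Φ : Fin (BD L f).card → C × C, IsShallowOrder L f Φ →
    ∀ i j : Fin (BD L f).card, Φ i = φ → Φ j = ψ → i < j

/-- The rank of the lower-left minor of the ordered boundary matrix with rows
the cells of filter value `≥ a` and columns the cells of filter value `≤ b`. -/
noncomputable def llRank (L : LC C) (f : C → ℝ) (a b : ℝ) : ℕ :=
  Matrix.rank (Matrix.of fun (x : {x : C // x ∈ L.cells ∧ a ≤ f x})
    (y : {y : C // y ∈ L.cells ∧ f y ≤ b}) => L.bd x.1 y.1)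

/-- `Φ` and `Ψ` differ by transposing two adjacent positions. -/
def AdjSwap {n : ℕ} (Φ Ψ : Fin n → C × C) : Prop :=
  ∃ (k : Fin n) (hk : (k : ℕ) + 1 < n),
    Ψ k = Φ ⟨k + 1, hk⟩ ∧ Ψ ⟨k + 1, hk⟩ = Φ k ∧
    ∀ i : Fin n, i ≠ k → i ≠ ⟨k + 1, hk⟩ → Ψ i = Φ i
section AuxBD

lemma sortAux_mem (f : C → ℝ) : ∀ (n : ℕ) (S : Finset C) (x : C),
    x ∈ sortAux f n S → x ∈ S := by
  intro n
  induction n with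
  | zero => intro S x hx; simp [sortAux] at hx
  | succ n ih =>
    intro S x hx
    rw [sortAux] at hx
    split_ifs at hx with h
    · simp only [List.mem_cons] at hx
      rcases hx with rfl | hx
      · exact (Finset.exists_min_image S f h).choose_spec.1
      · exact Finset.mem_of_mem_erase (ih _ _ hx)
    · simp at hx

lemma sortAux_nodup (f : C → ℝ) : ∀ (n : ℕ) (S : Finset C),
    (sortAux f n S).Nodup := by
  intro n
  induction n with
  | zero => intro S; simp [sortAux]
  | succ n ih =>
    intro S
    rw [sortAux]
    split_ifs with h
    · refine List.Nodup.cons ?_ (ih _)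
      intro hmem
      exact (Finset.notMem_erase _ _) (sortAux_mem f n _ _ hmem)
    · simp

/-- The invariant of the persistence pairing algorithm used here: all cells
appearing in the state belong to the complex and to the processed set `S`,
cells in pairs are not unpaired, and distinct pairs are component-disjoint. -/
def PairInv (L : LC C) (S : Set C) (st : Finset C × Finset (C × C)) : Prop :=
  (∀ u ∈ st.1, u ∈ L.cells ∧ u ∈ S) ∧
  (∀ p ∈ st.2, p.1 ∈ L.cells ∧ p.2 ∈ L.cells ∧ p.1 ∈ S ∧ p.2 ∈ S ∧
    p.1 ∉ st.1 ∧ p.2 ∉ st.1) ∧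
  (∀ p ∈ st.2, ∀ q ∈ st.2, p ≠ q →
    p.1 ≠ q.1 ∧ p.1 ≠ q.2 ∧ p.2 ≠ q.1 ∧ p.2 ≠ q.2)

lemma pairStep_death (L : LC C) (f : C → ℝ) (st : Finset C × Finset (C × C))
    (y : C) (hb : ¬ givesBirth L f y) :
    ∃ s : C, pairStep L f st y = (st.1.erase s, insert (s, y) st.2) ∧
      (s ∈ st.1 ∨ s = y) := by
  rw [pairStep, if_neg hb]
  refine ⟨_, rfl, ?_⟩
  by_cases h : ∃! A : Finset C, A ⊆ st.1 ∧
      HomBelow L f (f y) (∑ x ∈ A, canCycle L f x) (col L y)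
  · rw [dif_pos h]
    unfold maxCellD
    split_ifs with hne
    · exact Or.inl (h.exists.choose_spec.1
        ((Finset.exists_max_image _ f hne).choose_spec.1))
    · exact Or.inr rfl
  · rw [dif_neg h]
    unfold maxCellD
    rw [dif_neg (by simp)]
    exact Or.inr rfl

lemma pairInv_step (L : LC C) (f : C → ℝ) (S : Set C)
    (st : Finset C × Finset (C × C)) (y : C)
    (hI : PairInv L S st) (hy : y ∈ L.cells) (hyS : y ∉ S) :
    PairInv L (S ∪ {y}) (pairStep L f st y) := by
  obtain ⟨h1, h2, h3⟩ := hI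
  by_cases hb : givesBirth L f y
  · rw [pairStep, if_pos hb]
    refine ⟨?_, ?_, ?_⟩
    · intro u hu
      rcases Finset.mem_insert.mp hu with rfl | hu
      · exact ⟨hy, Or.inr rfl⟩
      · exact ⟨(h1 u hu).1, Or.inl (h1 u hu).2⟩
    · intro p hp
      obtain ⟨c1, c2, c3, c4, c5, c6⟩ := h2 p hp
      refine ⟨c1, c2, Or.inl c3, Or.inl c4, ?_, ?_⟩
      · intro hc
        rcases Finset.mem_insert.mp hc with h' | h'
        · exact hyS (h' ▸ c3)
        · exact c5 h'
      · intro hc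
        rcases Finset.mem_insert.mp hc with h' | h'
        · exact hyS (h' ▸ c4)
        · exact c6 h'
    · exact h3
  · obtain ⟨s, heq, hs⟩ := pairStep_death L f st y hb
    rw [heq]
    have hs_cells : s ∈ L.cells := by
      rcases hs with h' | rfl
      · exact (h1 s h').1
      · exact hy
    have hs_S : s ∈ S ∪ {y} := by
      rcases hs with h' | rfl
      · exact Or.inl (h1 s h').2
      · exact Or.inr rfl
    have hyU : y ∉ st.1 := fun hc => hyS (h1 y hc).2
    have hnotold : ∀ q ∈ st.2, s ≠ q.1 ∧ s ≠ q.2 ∧ y ≠ q.1 ∧ y ≠ q.2 := by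
      intro q hq
      obtain ⟨_, _, d3, d4, d5, d6⟩ := h2 q hq
      refine ⟨?_, ?_, ?_, ?_⟩
      · rcases hs with h' | rfl
        · exact fun hc => d5 (hc ▸ h')
        · exact fun hc => hyS (hc ▸ d3)
      · rcases hs with h' | rfl
        · exact fun hc => d6 (hc ▸ h')
        · exact fun hc => hyS (hc ▸ d4)
      · exact fun hc => hyS (hc ▸ d3)
      · exact fun hc => hyS (hc ▸ d4)
    refine ⟨?_, ?_, ?_⟩
    · intro u hu
      have hu' := Finset.mem_of_mem_erase hu
      exact ⟨(h1 u hu').1, Or.inl (h1 u hu').2⟩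
    · intro p hp
      rcases Finset.mem_insert.mp hp with rfl | hp
      · refine ⟨hs_cells, hy, hs_S, Or.inr rfl, Finset.notMem_erase _ _, ?_⟩
        exact fun hc => hyU (Finset.mem_of_mem_erase hc)
      · obtain ⟨c1, c2, c3, c4, c5, c6⟩ := h2 p hp
        exact ⟨c1, c2, Or.inl c3, Or.inl c4,
          fun hc => c5 (Finset.mem_of_mem_erase hc),
          fun hc => c6 (Finset.mem_of_mem_erase hc)⟩
    · intro p hp q hq hpq
      rcases Finset.mem_insert.mp hp with rfl | hp
      · rcases Finset.mem_insert.mp hq with h' | hq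
        · exact absurd h'.symm hpq
        · exact hnotold q hq
      · rcases Finset.mem_insert.mp hq with rfl | hq
        · obtain ⟨e1, e2, e3, e4⟩ := hnotold p hp
          exact ⟨e1.symm, e3.symm, e2.symm, e4.symm⟩
        · exact h3 p hp q hq hpq

lemma pairInv_fold (L : LC C) (f : C → ℝ) :
    ∀ (l : List C) (S : Set C) (st : Finset C × Finset (C × C)), l.Nodup →
    (∀ x ∈ l, x ∈ L.cells) → (∀ x ∈ l, x ∉ S) → PairInv L S st →
    PairInv L (S ∪ {x | x ∈ l}) (l.foldl (pairStep L f) st) := by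
  intro l
  induction l with
  | nil => intro S st _ _ _ hI; simpa using hI
  | cons y l ih =>
    intro S st hnd hc hS hI
    have h1 := pairInv_step L f S st y hI (hc y (by simp)) (hS y (by simp))
    have h2 := ih (S ∪ {y}) _ hnd.of_cons (fun x hx => hc x (by simp [hx]))
      (fun x hx => by
        rintro (h' | h')
        · exact hS x (by simp [hx]) h'
        · exact (List.nodup_cons.mp hnd).1 (h' ▸ hx)) h1
    have hset : (S ∪ {y}) ∪ {x | x ∈ l} = S ∪ {x | x ∈ y :: l} := by
      ext z
      simp only [Set.mem_union, Set.mem_singleton_iff, Set.mem_setOf_eq,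
        List.mem_cons]
      tauto
    rw [List.foldl_cons]
    rw [hset] at h2
    exact h2

lemma pairInv_pairState (L : LC C) (f : C → ℝ) :
    PairInv L {x | x ∈ sortedCells L f} (pairState L f) := by
  have h := pairInv_fold L f (sortedCells L f) ∅ (∅, ∅)
    (sortAux_nodup f _ _)
    (fun x hx => sortAux_mem f _ _ _ hx)
    (by simp)
    ⟨by simp, by simp, by simp⟩
  simpa [pairState] using h

lemma BD_cells {L : LC C} {f : C → ℝ} {φ : C × C} (h : φ ∈ BD L f) :
    φ.1 ∈ L.cells ∧ φ.2 ∈ L.cells := by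
  obtain ⟨c1, c2, _⟩ := (pairInv_pairState L f).2.1 φ h
  exact ⟨c1, c2⟩

lemma BD_disj {L : LC C} {f : C → ℝ} {φ φ' : C × C} (h : φ ∈ BD L f)
    (h' : φ' ∈ BD L f) (hne : φ ≠ φ') :
    φ.1 ≠ φ'.1 ∧ φ.1 ≠ φ'.2 ∧ φ.2 ≠ φ'.1 ∧ φ.2 ≠ φ'.2 :=
  (pairInv_pairState L f).2.2 φ h φ' h' hne

end AuxBD

/-- **Last and first.** Let `α₁` be the birth-death pair with
the last birth-giving cell, `ω₁` the pair with the first death-giving cell,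
`ψ ≠ α₁, ω₁` a birth-death pair, and `γ ≠ ψ` a shallow birth-death pair.
If `γ ≠ α₁`, canceling `γ` preserves the boundary entry `∂(b_{α₁}, d_ψ)`;
if `γ ≠ ω₁`, canceling `γ` preserves `∂(b_ψ, d_{ω₁})`. -/
theorem cancel_preserves_last_first_entries (L : LC C) (f : C → ℝ)
    (hf : IsFilter L f) (alpha1 omega1 ψ γ : C × C)
    (hα : alpha1 ∈ BD L f) (hαmax : ∀ φ ∈ BD L f, f φ.1 ≤ f alpha1.1)
    (hω : omega1 ∈ BD L f) (hωmin : ∀ φ ∈ BD L f, f omega1.2 ≤ f φ.2)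
    (hψ : ψ ∈ BD L f) (hψα : ψ ≠ alpha1) (hψω : ψ ≠ omega1)
    (hγ : γ ∈ BD L f) (hγsh : IsShallow L f γ.1 γ.2) (hγψ : γ ≠ ψ) :
    (γ ≠ alpha1 → (cancel L γ.1 γ.2).bd alpha1.1 ψ.2 = L.bd alpha1.1 ψ.2) ∧
    (γ ≠ omega1 → (cancel L γ.1 γ.2).bd ψ.1 omega1.2 = L.bd ψ.1 omega1.2) := by
  obtain ⟨hst, hsh1, hsh2⟩ := hγsh
  have hcγ := BD_cells hγ
  have hcα := BD_cells hα
  have hcω := BD_cells hω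
  have hcψ := BD_cells hψ
  have hdψ := BD_disj hψ hγ (fun h => hγψ h.symm)
  have hmemψ1 : ψ.1 ∈ L.cells \ {γ.1, γ.2} := by
    simp only [Finset.mem_sdiff, Finset.mem_insert, Finset.mem_singleton]
    exact ⟨hcψ.1, by push_neg; exact ⟨hdψ.1, hdψ.2.1⟩⟩
  have hmemψ2 : ψ.2 ∈ L.cells \ {γ.1, γ.2} := by
    simp only [Finset.mem_sdiff, Finset.mem_insert, Finset.mem_singleton]
    exact ⟨hcψ.2, by push_neg; exact ⟨hdψ.2.2.1, hdψ.2.2.2⟩⟩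
  have hbd : (cancel L γ.1 γ.2).bd = cancelBd L γ.1 γ.2 := by
    rw [cancel, dif_pos hst]
  constructor
  · intro hγα
    have hdα := BD_disj hα hγ (fun h => hγα h.symm)
    have hmemα1 : alpha1.1 ∈ L.cells \ {γ.1, γ.2} := by
      simp only [Finset.mem_sdiff, Finset.mem_insert, Finset.mem_singleton]
      exact ⟨hcα.1, by push_neg; exact ⟨hdα.1, hdα.2.1⟩⟩
    rw [hbd, cancelBd, if_pos ⟨hmemα1, hmemψ2⟩]
    have hz : L.bd alpha1.1 γ.2 = 0 := by
      by_contra hnz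
      have h1 : f alpha1.1 ≤ f γ.1 := hsh1 alpha1.1 hnz
      have h2 : f γ.1 ≤ f alpha1.1 := hαmax γ hγ
      exact hdα.1 (hf.1 alpha1.1 hcα.1 γ.1 hcγ.1 (le_antisymm h1 h2))
    rw [hz, mul_zero, add_zero]
  · intro hγω
    have hdω := BD_disj hω hγ (fun h => hγω h.symm)
    have hmemω2 : omega1.2 ∈ L.cells \ {γ.1, γ.2} := by
      simp only [Finset.mem_sdiff, Finset.mem_insert, Finset.mem_singleton]
      exact ⟨hcω.2, by push_neg; exact ⟨hdω.2.2.1, hdω.2.2.2⟩⟩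
    rw [hbd, cancelBd, if_pos ⟨hmemψ1, hmemω2⟩]
    have hz : L.bd γ.1 omega1.2 = 0 := by
      by_contra hnz
      have h1 : f γ.2 ≤ f omega1.2 := hsh2 omega1.2 hnz
      have h2 : f omega1.2 ≤ f γ.2 := hωmin γ hγ
      exact hdω.2.2.2 (hf.1 omega1.2 hcω.2 γ.2 hcγ.2 (le_antisymm h2 h1))
    rw [hz, zero_mul, add_zero]
end

section
/- Let f : X → ℝ be a filter on a Lefschetz complex with n = |BD(f)|, let Α order BD(f) by strictly decreasing birth value and Ω order BD(f) by strictly increasing death value, and let φ, ψ ∈ BD(f) be distinct pairs. (i) If φ = Α(i+1) and the boundary map ∂'_i of the quotient obtained by canceling Α(1),…,Α(i) satisfies ∂'_i(b_φ, d_ψ) = 1, then (φ, ψ) ∈ Depth(f). (ii) If φ = Ω(j+1) and the boundary map ∂''_j of the quotient obtained by canceling Ω(1),…,Ω(j) satisfies ∂''_j(b_ψ, d_φ) = 1, then (φ, ψ) ∈ Depth(f). -/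
attribute [local instance] Classical.propDecidable

variable {C : Type} [Fintype C] [DecidableEq C]

/-!
Two shallow cancellations of pairs with disjoint cells commute, and the pair of maximal birth
value in a shallow cancellation sequence is already shallow before any of the others is
canceled. Hence a shallow sequence can be re-sorted by decreasing birth value without changing
the quotient it reaches.

Suppose a shallow order cancels `ψ` before `φ`, where `φ = Α(i+1)`, so `Α(1), …, Α(i)` are the
pairs born after `b_φ`. Re-sort the pairs canceled before `ψ`, together with the later pairs
born after `b_φ`: the quotient reached is obtained from `∂'_i` by canceling pairs born before
`b_φ`, which leaves the entry `(b_φ, d_ψ) = 1` in place, while `ψ` is still shallow there. So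
`f(b_φ) ≤ f(b_ψ)`, whereas `ψ` survives in `∂'_i` and hence is born before `b_φ`. Part (ii) is
part (i) for the opposite complex with filter `-f`.
-/

lemma ne_zero_or_ne_zero_of_add_ne_zero {M : Type*} [AddZeroClass M] {a b : M} (h : a + b ≠ 0) :
    a ≠ 0 ∨ b ≠ 0 := by
  contrapose! h
  rw [h.1, h.2, add_zero]

lemma LC.ext {L M : LC C} (hc : L.cells = M.cells) (hd : L.dim = M.dim) (hb : L.bd = M.bd) :
    L = M := by
  cases L; cases M; simp_all

section Cancel

variable {L : LC C} {f : C → ℝ} {s t s' t' : C}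

lemma cancel_cells (hst : L.bd s t = 1) : (cancel L s t).cells = L.cells \ {s, t} := by
  rw [cancel, dif_pos hst]

lemma cancel_dim (hst : L.bd s t = 1) : (cancel L s t).dim = L.dim := by
  rw [cancel, dif_pos hst]

lemma cancel_bd (hst : L.bd s t = 1) : (cancel L s t).bd = cancelBd L s t := by
  rw [cancel, dif_pos hst]

lemma cancel_bd_of_mem (hst : L.bd s t = 1) {x y : C} (hx : x ∈ L.cells \ {s, t})
    (hy : y ∈ L.cells \ {s, t}) :
    (cancel L s t).bd x y = L.bd x y + L.bd s y * L.bd x t := by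
  rw [cancel_bd hst, cancelBd, if_pos ⟨hx, hy⟩]

lemma mem_of_cancel_bd_ne_zero (hst : L.bd s t = 1) {x y : C} (h : (cancel L s t).bd x y ≠ 0) :
    x ∈ L.cells \ {s, t} ∧ y ∈ L.cells \ {s, t} := by
  rw [← cancel_cells hst]
  exact (cancel L s t).bd_mem x y h

lemma cancel_cells_subset (L : LC C) (s t : C) : (cancel L s t).cells ⊆ L.cells := by
  unfold cancel
  split_ifs
  · exact Finset.sdiff_subset
  · exact subset_rfl

lemma IsShallow.bd_eq_one (h : IsShallow L f s t) : L.bd s t = 1 := h.1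

lemma IsShallow.left_mem (h : IsShallow L f s t) : s ∈ L.cells :=
  (L.bd_mem s t (by simp [h.1])).1

lemma IsShallow.right_mem (h : IsShallow L f s t) : t ∈ L.cells :=
  (L.bd_mem s t (by simp [h.1])).2

lemma IsShallow.ne (h : IsShallow L f s t) : s ≠ t := by
  rintro rfl
  simpa [L.bd_self] using h.1

lemma IsShallow.bd_mul_bd_eq_zero (hinj : Set.InjOn f L.cells) (h : IsShallow L f s t)
    (h' : IsShallow L f s' t') (hs : s' ≠ s) : L.bd s t' * L.bd s' t = 0 := by
  by_contra hc
  exact hs (hinj h'.left_mem h.left_mem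
    ((h.2.1 s' (right_ne_zero_of_mul hc)).antisymm (h'.2.1 s (left_ne_zero_of_mul hc))))

lemma IsShallow.cancel (hinj : Set.InjOn f L.cells) (h : IsShallow L f s t)
    (h' : IsShallow L f s' t') (hd1 : s' ≠ s) (hd2 : s' ≠ t) (hd3 : t' ≠ s) (hd4 : t' ≠ t) :
    IsShallow (cancel L s t) f s' t' := by
  have hst := h.bd_eq_one
  have hs' : s' ∈ L.cells \ {s, t} := by simp [h'.left_mem, hd1, hd2]
  have ht' : t' ∈ L.cells \ {s, t} := by simp [h'.right_mem, hd3, hd4]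
  refine ⟨?_, fun x hx => ?_, fun y hy => ?_⟩
  · rw [cancel_bd_of_mem hst hs' ht', h'.bd_eq_one, h.bd_mul_bd_eq_zero hinj h' hd1, add_zero]
  · rw [cancel_bd_of_mem hst (mem_of_cancel_bd_ne_zero hst hx).1 ht'] at hx
    rcases ne_zero_or_ne_zero_of_add_ne_zero hx with hx | hx
    · exact h'.2.1 x hx
    · exact (h.2.1 x (right_ne_zero_of_mul hx)).trans (h'.2.1 s (left_ne_zero_of_mul hx))
  · rw [cancel_bd_of_mem hst hs' (mem_of_cancel_bd_ne_zero hst hy).2] at hy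
    rcases ne_zero_or_ne_zero_of_add_ne_zero hy with hy | hy
    · exact h'.2.2 y hy
    · exact (h'.2.2 t (right_ne_zero_of_mul hy)).trans (h.2.2 y (left_ne_zero_of_mul hy))

lemma cancel_comm (hinj : Set.InjOn f L.cells) (h : IsShallow L f s t)
    (h' : IsShallow L f s' t') (hd1 : s' ≠ s) (hd2 : s' ≠ t) (hd3 : t' ≠ s) (hd4 : t' ≠ t) :
    cancel (cancel L s t) s' t' = cancel (cancel L s' t') s t := by
  have hst := h.bd_eq_one
  have hst' := h'.bd_eq_one
  have h₁ := (h.cancel hinj h' hd1 hd2 hd3 hd4).bd_eq_one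
  have h₂ := (h'.cancel hinj h hd1.symm hd3.symm hd2.symm hd4.symm).bd_eq_one
  apply LC.ext
  · rw [cancel_cells h₁, cancel_cells h₂, cancel_cells hst, cancel_cells hst', sdiff_sdiff_comm]
  · rw [cancel_dim h₁, cancel_dim h₂, cancel_dim hst, cancel_dim hst']
  funext x y
  rw [cancel_bd h₁, cancel_bd h₂]
  simp only [cancelBd, cancel_cells hst, cancel_cells hst', sdiff_sdiff_comm (a := L.cells)]
  split_ifs with hxy
  · have hx : x ∈ L.cells \ {s, t} ∧ x ∈ L.cells \ {s', t'} := by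
      simp only [Finset.mem_sdiff] at hxy ⊢; tauto
    have hy : y ∈ L.cells \ {s, t} ∧ y ∈ L.cells \ {s', t'} := by
      simp only [Finset.mem_sdiff] at hxy ⊢; tauto
    have hs' : s' ∈ L.cells \ {s, t} := by simp [h'.left_mem, hd1, hd2]
    have ht' : t' ∈ L.cells \ {s, t} := by simp [h'.right_mem, hd3, hd4]
    have hs : s ∈ L.cells \ {s', t'} := by simp [h.left_mem, hd1.symm, hd3.symm]
    have ht : t ∈ L.cells \ {s', t'} := by simp [h.right_mem, hd2.symm, hd4.symm]
    rw [cancel_bd_of_mem hst hx.1 hy.1, cancel_bd_of_mem hst hs' hy.1,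
      cancel_bd_of_mem hst hx.1 ht', cancel_bd_of_mem hst' hx.2 hy.2,
      cancel_bd_of_mem hst' hs hy.2, cancel_bd_of_mem hst' hx.2 ht]
    -- the two expansions differ by a multiple of `∂(s, t') ∂(s', t)`
    linear_combination (L.bd s y * L.bd x t - L.bd s' y * L.bd x t') *
      h.bd_mul_bd_eq_zero hinj h' hd1
  · rfl

end Cancel

def pairCells {α : Type*} : List (α × α) → List α
  | [] => []
  | p :: ps => p.1 :: p.2 :: pairCells ps

section PairCells

variable {α : Type*} {l l' : List (α × α)} {a b : α × α} {c : α}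

@[simp] lemma pairCells_nil : pairCells ([] : List (α × α)) = [] := rfl

@[simp] lemma pairCells_cons (p : α × α) (ps : List (α × α)) :
    pairCells (p :: ps) = p.1 :: p.2 :: pairCells ps := rfl

lemma mem_pairCells : c ∈ pairCells l ↔ ∃ p ∈ l, c = p.1 ∨ c = p.2 := by
  induction l with
  | nil => simp
  | cons p ps ih =>
    simp only [pairCells_cons, List.mem_cons, ih, exists_eq_or_imp, or_assoc]

lemma eq_of_nodup_pairCells (hnd : (pairCells l).Nodup) (ha : a ∈ l) (hb : b ∈ l)
    (hca : c = a.1 ∨ c = a.2) (hcb : c = b.1 ∨ c = b.2) : a = b := by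
  induction l with
  | nil => simp at ha
  | cons p ps ih =>
    simp only [pairCells_cons, List.nodup_cons, List.mem_cons] at hnd
    have hp : ∀ q ∈ ps, c = q.1 ∨ c = q.2 → c ≠ p.1 ∧ c ≠ p.2 := by
      rintro q hq hcq
      have hc : c ∈ pairCells ps := mem_pairCells.mpr ⟨q, hq, hcq⟩
      exact ⟨fun e => hnd.1 (Or.inr (e ▸ hc)), fun e => hnd.2.1 (e ▸ hc)⟩
    rcases List.mem_cons.mp ha with rfl | ha' <;> rcases List.mem_cons.mp hb with rfl | hb'
    · rfl
    · obtain ⟨h1, h2⟩ := hp b hb' hcb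
      exact (hca.elim h1 h2).elim
    · obtain ⟨h1, h2⟩ := hp a ha' hca
      exact (hcb.elim h1 h2).elim
    · exact ih hnd.2.2 ha' hb'

lemma cells_ne_of_nodup_pairCells (hnd : (pairCells l).Nodup) (ha : a ∈ l) (hb : b ∈ l)
    (hab : a ≠ b) : a.1 ≠ b.1 ∧ a.1 ≠ b.2 ∧ a.2 ≠ b.1 ∧ a.2 ≠ b.2 := by
  have h := fun c hca hcb => hab (eq_of_nodup_pairCells (c := c) hnd ha hb hca hcb)
  exact ⟨fun e => h _ (Or.inl rfl) (Or.inl e), fun e => h _ (Or.inl rfl) (Or.inr e),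
    fun e => h _ (Or.inr rfl) (Or.inl e), fun e => h _ (Or.inr rfl) (Or.inr e)⟩

lemma not_mem_pairCells_of_not_mem (hnd : (pairCells l).Nodup) (hsub : ∀ q ∈ l', q ∈ l)
    (ha : a ∈ l) (ha' : a ∉ l') (hc : c = a.1 ∨ c = a.2) : c ∉ pairCells l' := by
  intro hc'
  obtain ⟨q, hq, hcq⟩ := mem_pairCells.mp hc'
  exact ha' (eq_of_nodup_pairCells hnd (hsub q hq) ha hcq hc ▸ hq)

lemma nodup_of_nodup_pairCells (hnd : (pairCells l).Nodup) : l.Nodup := by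
  induction l with
  | nil => exact List.nodup_nil
  | cons p ps ih =>
    simp only [pairCells_cons, List.nodup_cons, List.mem_cons] at hnd
    exact List.nodup_cons.mpr
      ⟨fun hp => hnd.1 (Or.inr (mem_pairCells.mpr ⟨p, hp, Or.inl rfl⟩)), ih hnd.2.2⟩

end PairCells

def IsShallowSeq (f : C → ℝ) : LC C → List (C × C) → Prop
  | _, [] => True
  | M, p :: ps => IsShallow M f p.1 p.2 ∧ IsShallowSeq f (cancel M p.1 p.2) ps

section ShallowSeq

variable {f : C → ℝ} {M : LC C} {l l' : List (C × C)}

@[simp] lemma isShallowSeq_nil : IsShallowSeq f M [] := trivial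

@[simp] lemma isShallowSeq_cons {p : C × C} {ps : List (C × C)} :
    IsShallowSeq f M (p :: ps) ↔ IsShallow M f p.1 p.2 ∧ IsShallowSeq f (cancel M p.1 p.2) ps :=
  Iff.rfl

@[simp] lemma cancelList_nil : cancelList M [] = M := rfl

@[simp] lemma cancelList_cons (p : C × C) (ps : List (C × C)) :
    cancelList M (p :: ps) = cancelList (cancel M p.1 p.2) ps := rfl

lemma cancelList_append (l₁ l₂ : List (C × C)) :
    cancelList M (l₁ ++ l₂) = cancelList (cancelList M l₁) l₂ := by
  induction l₁ generalizing M with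
  | nil => rfl
  | cons p ps ih => exact ih

lemma cancelList_cells_subset (M : LC C) (l : List (C × C)) :
    (cancelList M l).cells ⊆ M.cells := by
  induction l generalizing M with
  | nil => exact subset_rfl
  | cons p ps ih => exact (ih _).trans (cancel_cells_subset M p.1 p.2)

lemma isShallowSeq_append {l₁ l₂ : List (C × C)} :
    IsShallowSeq f M (l₁ ++ l₂) ↔ IsShallowSeq f M l₁ ∧ IsShallowSeq f (cancelList M l₁) l₂ := by
  induction l₁ generalizing M with
  | nil => simp
  | cons p ps ih => simp [ih, and_assoc]

namespace IsShallowSeq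

lemma cells_cancelList (hv : IsShallowSeq f M l) :
    (cancelList M l).cells = M.cells \ (pairCells l).toFinset := by
  induction l generalizing M with
  | nil => simp
  | cons p ps ih =>
    rw [cancelList_cons, ih hv.2, cancel_cells hv.1.bd_eq_one]
    ext c
    simp only [Finset.mem_sdiff, Finset.mem_insert, Finset.mem_singleton, not_or,
      List.mem_toFinset, pairCells_cons, List.toFinset_cons]
    tauto

lemma pairCells_subset (hv : IsShallowSeq f M l) : ∀ c ∈ pairCells l, c ∈ M.cells := by
  induction l generalizing M with
  | nil => simp
  | cons p ps ih =>
    simp only [pairCells_cons, List.mem_cons]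
    rintro c (rfl | rfl | hc)
    · exact hv.1.left_mem
    · exact hv.1.right_mem
    · exact cancel_cells_subset M p.1 p.2 (ih hv.2 c hc)

lemma nodup_pairCells (hv : IsShallowSeq f M l) : (pairCells l).Nodup := by
  induction l generalizing M with
  | nil => exact List.nodup_nil
  | cons p ps ih =>
    have hout : ∀ c ∈ pairCells ps, c ≠ p.1 ∧ c ≠ p.2 := fun c hc => by
      have h := hv.2.pairCells_subset c hc
      rw [cancel_cells hv.1.bd_eq_one] at h
      simpa using (Finset.mem_sdiff.mp h).2
    simp only [pairCells_cons, List.nodup_cons, List.mem_cons, not_or]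
    exact ⟨⟨hv.1.ne, fun h => (hout _ h).1 rfl⟩, fun h => (hout _ h).2 rfl, ih hv.2⟩

lemma nodup (hv : IsShallowSeq f M l) : l.Nodup :=
  nodup_of_nodup_pairCells hv.nodup_pairCells

lemma injOn_birth (hv : IsShallowSeq f M l) (hinj : Set.InjOn f M.cells) :
    Set.InjOn (fun χ : C × C => f χ.1) {χ | χ ∈ l} := fun a ha b hb e => by
  by_contra hab
  refine (cells_ne_of_nodup_pairCells hv.nodup_pairCells ha hb hab).1 (hinj ?_ ?_ e)
  · exact hv.pairCells_subset _ (mem_pairCells.mpr ⟨a, ha, Or.inl rfl⟩)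
  · exact hv.pairCells_subset _ (mem_pairCells.mpr ⟨b, hb, Or.inl rfl⟩)

lemma mem_cells_cancelList (hv : IsShallowSeq f M l) (hv' : IsShallowSeq f M l')
    (hsub : ∀ q ∈ l', q ∈ l) {χ : C × C} (hχ : χ ∈ l) (hχ' : χ ∉ l') {c : C}
    (hc : c = χ.1 ∨ c = χ.2) : c ∈ (cancelList M l').cells := by
  rw [hv'.cells_cancelList, Finset.mem_sdiff, List.mem_toFinset]
  exact ⟨hv.pairCells_subset c (mem_pairCells.mpr ⟨χ, hχ, hc⟩),
    not_mem_pairCells_of_not_mem hv.nodup_pairCells hsub hχ hχ' hc⟩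

lemma cancelList_bd_eq (hv : IsShallowSeq f M l) {x y : C}
    (hx : x ∈ (cancelList M l).cells) (hy : y ∈ (cancelList M l).cells)
    (hlt : ∀ q ∈ l, f q.1 < f x) : (cancelList M l).bd x y = M.bd x y := by
  induction l generalizing M with
  | nil => rfl
  | cons p ps ih =>
    have hst := hv.1.bd_eq_one
    rw [cancelList_cons] at hx hy ⊢
    rw [ih hv.2 hx hy fun q hq => hlt q (List.mem_cons_of_mem _ hq)]
    have hxc : x ∈ M.cells \ {p.1, p.2} := by
      rw [← cancel_cells hst]; exact cancelList_cells_subset _ _ hx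
    have hyc : y ∈ M.cells \ {p.1, p.2} := by
      rw [← cancel_cells hst]; exact cancelList_cells_subset _ _ hy
    have hxp : M.bd x p.2 = 0 := by
      by_contra h
      exact (hv.1.2.1 x h).not_gt (hlt p List.mem_cons_self)
    rw [cancel_bd_of_mem hst hxc hyc, hxp, mul_zero, add_zero]

lemma isShallow_cancelList (hv : IsShallowSeq f M l) (hinj : Set.InjOn f M.cells) {s t : C}
    (hst : IsShallow M f s t) (hs : s ∉ pairCells l) (ht : t ∉ pairCells l) :
    IsShallow (cancelList M l) f s t := by
  induction l generalizing M with
  | nil => exact hst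
  | cons p ps ih =>
    simp only [pairCells_cons, List.mem_cons, not_or] at hs ht
    exact ih hv.2 (hinj.mono (cancel_cells_subset M p.1 p.2))
      (hv.1.cancel hinj hst hs.1 hs.2.1 ht.1 ht.2.1) hs.2.2 ht.2.2

end IsShallowSeq

end ShallowSeq

lemma LC.bd_eq_sum_of_bd_eq_one_left (M : LC C) {u v w : C} (huv : M.bd u v = 1) :
    M.bd v w = ∑ y ∈ Finset.univ.erase v, M.bd u y * M.bd y w := by
  have h := M.bd_sq u w
  rw [← Finset.add_sum_erase _ _ (Finset.mem_univ v), huv, one_mul] at h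
  exact CharTwo.add_eq_zero.mp h

lemma LC.bd_eq_sum_of_bd_eq_one_right (M : LC C) {u v w : C} (huv : M.bd u v = 1) :
    M.bd w u = ∑ y ∈ Finset.univ.erase u, M.bd w y * M.bd y v := by
  have h := M.bd_sq w v
  rw [← Finset.add_sum_erase _ _ (Finset.mem_univ u), huv, mul_one] at h
  exact CharTwo.add_eq_zero.mp h

section Pullback

variable {M : LC C} {f : C → ℝ} {p : C × C} {s t : C}

lemma bd_facet_eq_zero_of_isShallow_cancel (hinj : Set.InjOn f M.cells)
    (hp : IsShallow M f p.1 p.2) (hs : IsShallow (cancel M p.1 p.2) f s t) (hlt : f p.1 < f s)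
    {x : C} (hx : f s < f x) : M.bd x t = 0 := by
  by_contra hxt
  let S := M.cells.filter fun x => f s < f x ∧ M.bd x t ≠ 0
  have hS : ∀ {x}, x ∈ S ↔ f s < f x ∧ M.bd x t ≠ 0 := fun {x} => by
    simp only [S, Finset.mem_filter, and_iff_right_iff_imp]
    exact fun h => (M.bd_mem x t h.2).1
  obtain ⟨x₀, hx₀, hmax⟩ := S.exists_max_image f ⟨x, hS.mpr ⟨hx, hxt⟩⟩
  obtain ⟨hsx₀, hx₀t⟩ := hS.mp hx₀
  by_cases hx₀p : x₀ = p.2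
  · -- expanding `∂(p.2, t)` along the row of `p.1` produces a counterexample above `p.2`
    subst hx₀p
    rw [M.bd_eq_sum_of_bd_eq_one_left hp.bd_eq_one] at hx₀t
    obtain ⟨y, hy, hyt⟩ := Finset.exists_ne_zero_of_sum_ne_zero hx₀t
    have hpy := left_ne_zero_of_mul hyt
    have hlt' : f p.2 < f y := (hp.2.2 y hpy).lt_of_ne fun e =>
      Finset.ne_of_mem_erase hy (hinj (M.bd_mem _ _ hpy).2 hp.right_mem e.symm)
    exact (hmax y (hS.mpr ⟨hsx₀.trans hlt', right_ne_zero_of_mul hyt⟩)).not_gt hlt'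
  · have hst := hp.bd_eq_one
    have hx₀p2 : M.bd x₀ p.2 = 0 := by
      by_contra h
      linarith [hp.2.1 x₀ h]
    have hx₀c : x₀ ∈ M.cells \ {p.1, p.2} := by
      have : x₀ ≠ p.1 := by rintro rfl; linarith
      simp [(M.bd_mem x₀ t hx₀t).1, this, hx₀p]
    have htc : t ∈ M.cells \ {p.1, p.2} := by rw [← cancel_cells hst]; exact hs.right_mem
    have h := cancel_bd_of_mem hst hx₀c htc
    rw [hx₀p2, mul_zero, add_zero] at h
    exact (hs.2.1 x₀ (h ▸ hx₀t)).not_gt hsx₀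

lemma bd_cofacet_eq_zero_of_isShallow_cancel (hinj : Set.InjOn f M.cells)
    (hp : IsShallow M f p.1 p.2) (hs : IsShallow (cancel M p.1 p.2) f s t) (hlt : f p.1 < f s)
    {y : C} (hy : f y < f t) : M.bd s y = 0 := by
  by_contra hsy
  let S := M.cells.filter fun y => f y < f t ∧ M.bd s y ≠ 0
  have hS : ∀ {y}, y ∈ S ↔ f y < f t ∧ M.bd s y ≠ 0 := fun {y} => by
    simp only [S, Finset.mem_filter, and_iff_right_iff_imp]
    exact fun h => (M.bd_mem s y h.2).2
  obtain ⟨y₀, hy₀, hmin⟩ := S.exists_min_image f ⟨y, hS.mpr ⟨hy, hsy⟩⟩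
  obtain ⟨hy₀t, hsy₀⟩ := hS.mp hy₀
  have hsp : M.bd s p.2 = 0 := by
    by_contra h
    linarith [hp.2.1 s h]
  by_cases hy₀p : y₀ = p.1
  · -- expanding `∂(s, p.1)` along the column of `p.2` produces a counterexample below `p.1`
    subst hy₀p
    rw [M.bd_eq_sum_of_bd_eq_one_right hp.bd_eq_one] at hsy₀
    obtain ⟨y, hy, hsy⟩ := Finset.exists_ne_zero_of_sum_ne_zero hsy₀
    have hyp := right_ne_zero_of_mul hsy
    have hlt' : f y < f p.1 := (hp.2.1 y hyp).lt_of_ne fun e =>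
      Finset.ne_of_mem_erase hy (hinj (M.bd_mem _ _ hyp).1 hp.left_mem e)
    exact (hmin y (hS.mpr ⟨hlt'.trans hy₀t, left_ne_zero_of_mul hsy⟩)).not_gt hlt'
  · have hst := hp.bd_eq_one
    have hy₀c : y₀ ∈ M.cells \ {p.1, p.2} := by
      have : y₀ ≠ p.2 := by rintro rfl; exact hsy₀ hsp
      simp [(M.bd_mem s y₀ hsy₀).2, this, hy₀p]
    have hsc : s ∈ M.cells \ {p.1, p.2} := by rw [← cancel_cells hst]; exact hs.left_mem
    have h := cancel_bd_of_mem hst hsc hy₀c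
    rw [hsp, mul_zero, add_zero] at h
    exact (hs.2.2 y₀ (h ▸ hsy₀)).not_gt hy₀t

lemma isShallow_of_isShallow_cancel (hinj : Set.InjOn f M.cells) (hp : IsShallow M f p.1 p.2)
    (hs : IsShallow (cancel M p.1 p.2) f s t) (hlt : f p.1 < f s) : IsShallow M f s t := by
  have hst := hp.bd_eq_one
  have hsp : M.bd s p.2 = 0 := by
    by_contra h
    linarith [hp.2.1 s h]
  have hsc : s ∈ M.cells \ {p.1, p.2} := by rw [← cancel_cells hst]; exact hs.left_mem
  have htc : t ∈ M.cells \ {p.1, p.2} := by rw [← cancel_cells hst]; exact hs.right_mem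
  refine ⟨?_, fun x hx => not_lt.mp fun h => hx ?_, fun y hy => not_lt.mp fun h => hy ?_⟩
  · rw [← hs.bd_eq_one, cancel_bd_of_mem hst hsc htc, hsp, mul_zero, add_zero]
  · exact bd_facet_eq_zero_of_isShallow_cancel hinj hp hs hlt h
  · exact bd_cofacet_eq_zero_of_isShallow_cancel hinj hp hs hlt h

end Pullback

lemma exists_perm_pairwise_gt {α : Type*} (g : α → ℝ) {l : List α} (hnd : l.Nodup)
    (hinj : Set.InjOn g {x | x ∈ l}) :
    ∃ l' : List α, l'.Perm l ∧ l'.Pairwise fun a b => g b < g a := by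
  let le : α → α → Bool := fun a b => decide (g b ≤ g a)
  have hsorted := List.pairwise_mergeSort (le := le)
    (fun a b c hab hbc => by simp only [le, decide_eq_true_eq] at *; linarith)
    (fun a b => by simpa [le] using le_total (g b) (g a)) l
  have hperm := List.mergeSort_perm l le
  refine ⟨_, hperm, (hsorted.and (hperm.nodup_iff.mpr hnd)).imp_of_mem ?_⟩
  intro a b ha hb ⟨hab, hne⟩
  simp only [le, decide_eq_true_eq] at hab
  exact hab.lt_of_ne fun e => hne (hinj (hperm.subset ha) (hperm.subset hb) e.symm)


namespace IsShallowSeq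

variable {f : C → ℝ} {M : LC C} {l : List (C × C)} {χ : C × C}

lemma isShallow_of_maxBirth (hv : IsShallowSeq f M l) (hinj : Set.InjOn f M.cells)
    (hχ : χ ∈ l) (hmax : ∀ q ∈ l, q ≠ χ → f q.1 < f χ.1) : IsShallow M f χ.1 χ.2 := by
  induction l generalizing M with
  | nil => simp at hχ
  | cons p ps ih =>
    by_cases hpχ : p = χ
    · exact hpχ ▸ hv.1
    have hχ' : χ ∈ ps := (List.mem_cons.mp hχ).resolve_left (Ne.symm hpχ)
    exact isShallow_of_isShallow_cancel hinj hv.1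
      (ih hv.2 (hinj.mono (cancel_cells_subset M p.1 p.2)) hχ'
        fun q hq => hmax q (List.mem_cons_of_mem _ hq))
      (hmax p List.mem_cons_self hpχ)

lemma erase_of_maxBirth (hv : IsShallowSeq f M l) (hinj : Set.InjOn f M.cells)
    (hχ : χ ∈ l) (hmax : ∀ q ∈ l, q ≠ χ → f q.1 < f χ.1) :
    IsShallowSeq f (cancel M χ.1 χ.2) (l.erase χ) ∧
      cancelList (cancel M χ.1 χ.2) (l.erase χ) = cancelList M l := by
  induction l generalizing M with
  | nil => simp at hχ
  | cons p ps ih =>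
    by_cases hpχ : p = χ
    · subst hpχ
      exact ⟨by simpa using hv.2, by simp⟩
    have hχ' : χ ∈ ps := (List.mem_cons.mp hχ).resolve_left (Ne.symm hpχ)
    have hχM := hv.isShallow_of_maxBirth hinj hχ hmax
    obtain ⟨hd1, hd2, hd3, hd4⟩ :=
      cells_ne_of_nodup_pairCells hv.nodup_pairCells List.mem_cons_self hχ hpχ
    have hcomm := cancel_comm hinj hχM hv.1 hd1 hd2 hd3 hd4
    obtain ⟨hv', heq⟩ := ih hv.2 (hinj.mono (cancel_cells_subset M p.1 p.2)) hχ'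
      fun q hq => hmax q (List.mem_cons_of_mem _ hq)
    rw [List.erase_cons_tail (by simpa using hpχ)]
    refine ⟨⟨hχM.cancel hinj hv.1 hd1 hd2 hd3 hd4, hcomm ▸ hv'⟩, ?_⟩
    rw [cancelList_cons, hcomm, heq, cancelList_cons]

lemma perm_of_pairwise (hv : IsShallowSeq f M l) (hinj : Set.InjOn f M.cells)
    {l' : List (C × C)} (hperm : l'.Perm l) (hsort : l'.Pairwise fun a b => f b.1 < f a.1) :
    IsShallowSeq f M l' ∧ cancelList M l' = cancelList M l := by
  induction l' generalizing M l with
  | nil => simp [hperm.symm.eq_nil]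
  | cons χ l'' ih =>
    rw [List.pairwise_cons] at hsort
    have hχ : χ ∈ l := hperm.subset List.mem_cons_self
    have hmax : ∀ q ∈ l, q ≠ χ → f q.1 < f χ.1 := fun q hq hqχ =>
      hsort.1 q ((List.mem_cons.mp (hperm.symm.subset hq)).resolve_left hqχ)
    obtain ⟨hv', heq⟩ := hv.erase_of_maxBirth hinj hχ hmax
    obtain ⟨hv'', heq'⟩ := ih hv' (hinj.mono (cancel_cells_subset M χ.1 χ.2))
      (hperm.trans (List.perm_cons_erase hχ)).cons_inv hsort.2
    exact ⟨⟨hv.isShallow_of_maxBirth hinj hχ hmax, hv''⟩, by rw [cancelList_cons, heq', heq]⟩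

lemma exists_append_of_prefix_birth_gt (hv : IsShallowSeq f M l)
    (hinj : Set.InjOn f M.cells) (b : ℝ) {S : List (C × C)}
    (hS : S.Pairwise fun a b => f b.1 < f a.1)
    (hSmem : ∀ χ, χ ∈ S ↔ χ ∈ l ∧ b < f χ.1) :
    ∃ R : List (C × C), (∀ χ, χ ∈ R ↔ χ ∈ l ∧ f χ.1 ≤ b) ∧
      IsShallowSeq f M (S ++ R) ∧ cancelList M (S ++ R) = cancelList M l := by
  obtain ⟨R, hRperm, hR⟩ := exists_perm_pairwise_gt (fun χ : C × C => f χ.1)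
    (hv.nodup.filter fun χ => decide (f χ.1 ≤ b))
    ((hv.injOn_birth hinj).mono fun χ hχ => List.mem_of_mem_filter hχ)
  have hRmem : ∀ χ, χ ∈ R ↔ χ ∈ l ∧ f χ.1 ≤ b := fun χ => by
    rw [hRperm.mem_iff, List.mem_filter, decide_eq_true_iff]
  refine ⟨R, hRmem, hv.perm_of_pairwise hinj ?_ ?_⟩
  · have hnd : (S ++ R).Nodup := List.nodup_append.mpr ⟨hS.nodup, hR.nodup,
      fun a ha c hc hac => ((hSmem a).mp ha).2.not_ge (hac ▸ ((hRmem c).mp hc).2)⟩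
    refine (List.perm_ext_iff_of_nodup hnd hv.nodup).mpr fun χ => ?_
    rw [List.mem_append, hSmem, hRmem, ← and_or_left, and_iff_left_iff_imp]
    exact fun _ => lt_or_ge b (f χ.1)
  · exact List.pairwise_append.mpr ⟨hS, hR,
      fun a ha c hc => ((hRmem c).mp hc).2.trans_lt ((hSmem a).mp ha).2⟩

lemma exists_birth_gt_after_prefix {L : LC C} {T U : List (C × C)}
    (hv : IsShallowSeq f L (T ++ U)) (hinj : Set.InjOn f L.cells) (b : ℝ) :
    ∃ S : List (C × C), (∀ χ, χ ∈ S ↔ χ ∈ U ∧ b < f χ.1) ∧ IsShallowSeq f L (T ++ S) := by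
  obtain ⟨hT, hU⟩ := isShallowSeq_append.mp hv
  have hinjT : Set.InjOn f (cancelList L T).cells := hinj.mono (cancelList_cells_subset L T)
  obtain ⟨S, hSperm, hS⟩ := exists_perm_pairwise_gt (fun χ : C × C => f χ.1)
    (hU.nodup.filter fun χ => decide (b < f χ.1))
    ((hU.injOn_birth hinjT).mono fun χ hχ => List.mem_of_mem_filter hχ)
  have hSmem : ∀ χ, χ ∈ S ↔ χ ∈ U ∧ b < f χ.1 := fun χ => by
    rw [hSperm.mem_iff, List.mem_filter, decide_eq_true_iff]
  obtain ⟨_, -, hSR, -⟩ := hU.exists_append_of_prefix_birth_gt hinjT b hS hSmem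
  exact ⟨S, hSmem, isShallowSeq_append.mpr ⟨hT, (isShallowSeq_append.mp hSR).1⟩⟩

lemma isShallow_cancelList_append {L : LC C} {T rest S : List (C × C)} {ψ : C × C}
    (hv : IsShallowSeq f L (T ++ ψ :: rest))
    (hinj : Set.InjOn f L.cells) (hTS : IsShallowSeq f L (T ++ S)) (hS : ∀ q ∈ S, q ∈ rest) :
    IsShallow (cancelList L (T ++ S)) f ψ.1 ψ.2 := by
  obtain ⟨-, hrest⟩ := isShallowSeq_append.mp hv
  have hψS : ψ ∉ S := fun h => (List.nodup_cons.mp hrest.nodup).1 (hS ψ h)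
  have hcells : ∀ c, c = ψ.1 ∨ c = ψ.2 → c ∉ pairCells S := fun c =>
    not_mem_pairCells_of_not_mem hrest.nodup_pairCells
      (fun q hq => List.mem_cons_of_mem _ (hS q hq)) List.mem_cons_self hψS
  rw [cancelList_append]
  exact (isShallowSeq_append.mp hTS).2.isShallow_cancelList
    (hinj.mono (cancelList_cells_subset L T)) hrest.1 (hcells _ (Or.inl rfl))
    (hcells _ (Or.inr rfl))

end IsShallowSeq
lemma cancelList_bd_ne_one_of_precedes {L : LC C} {f : C → ℝ} (hinj : Set.InjOn f L.cells)
    {T rest : List (C × C)} {φ ψ : C × C} (hv : IsShallowSeq f L (T ++ ψ :: rest))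
    (hφ : φ ∈ rest) {P : List (C × C)} (hP : P.Pairwise fun a b => f b.1 < f a.1)
    (hPmem : ∀ χ, χ ∈ P ↔ χ ∈ T ++ ψ :: rest ∧ f φ.1 < f χ.1) :
    (cancelList L P).bd φ.1 ψ.2 ≠ 1 := by
  intro E
  have hφl : φ ∈ T ++ ψ :: rest := by simp [hφ]
  have hψl : ψ ∈ T ++ ψ :: rest := by simp
  have hdisj := (List.nodup_append.mp hv.nodup).2.2
  have hψrest : ψ ∉ rest := (List.nodup_cons.mp (List.nodup_append.mp hv.nodup).2.1).1
  obtain ⟨S, hSmem, hTS⟩ := hv.exists_birth_gt_after_prefix hinj (f φ.1)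
  have hsub : ∀ χ ∈ T ++ S, χ ∈ T ++ ψ :: rest := fun χ hχ => by
    rcases List.mem_append.mp hχ with h | h
    · exact List.mem_append_left _ h
    · exact List.mem_append_right _ ((hSmem χ).mp h).1
  obtain ⟨R, hRmem, hPR, hW⟩ := hTS.exists_append_of_prefix_birth_gt hinj (f φ.1) hP fun χ => by
    rw [hPmem, List.mem_append, List.mem_append, hSmem]
    tauto
  obtain ⟨hPv, hRv⟩ := isShallowSeq_append.mp hPR
  -- `ψ.2` survives in the quotient by `P`, so `ψ` is born before `φ`
  have hψP : ψ ∉ P := fun h => by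
    have hψ2 := ((cancelList L P).bd_mem φ.1 ψ.2 (by rw [E]; exact one_ne_zero)).2
    rw [hPv.cells_cancelList, Finset.mem_sdiff, List.mem_toFinset] at hψ2
    exact hψ2.2 (mem_pairCells.mpr ⟨ψ, h, Or.inr rfl⟩)
  have hψφ : f ψ.1 < f φ.1 :=
    (not_lt.mp fun h => hψP ((hPmem ψ).mpr ⟨hψl, h⟩)).lt_of_ne fun e =>
      hψrest (hv.injOn_birth hinj hψl hφl e ▸ hφ)
  have hSrest : ∀ q ∈ S, q ∈ rest := fun q hq => by
    obtain ⟨hq, hqφ⟩ := (hSmem q).mp hq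
    exact (List.mem_cons.mp hq).resolve_left (by rintro rfl; exact hψφ.not_gt hqφ)
  have hφTS : φ ∉ T ++ S := fun h => by
    rcases List.mem_append.mp h with h | h
    · exact hdisj φ h φ (List.mem_cons_of_mem _ hφ) rfl
    · exact lt_irrefl _ ((hSmem φ).mp h).2
  have hψTS : ψ ∉ T ++ S := fun h => by
    rcases List.mem_append.mp h with h | h
    · exact hdisj ψ h ψ List.mem_cons_self rfl
    · exact hψrest (hSrest ψ h)
  -- the entry `(φ.1, ψ.2)` survives canceling `R`, whose pairs are all born before `φ`
  have hEW : (cancelList L (T ++ S)).bd φ.1 ψ.2 = 1 := by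
    have hφW := hv.mem_cells_cancelList hTS hsub hφl hφTS (Or.inl rfl)
    have hψW := hv.mem_cells_cancelList hTS hsub hψl hψTS (Or.inr rfl)
    rw [← hW, cancelList_append] at hφW hψW ⊢
    rw [hRv.cancelList_bd_eq hφW hψW fun q hq => ?_, E]
    obtain ⟨hq, hqφ⟩ := (hRmem q).mp hq
    exact hqφ.lt_of_ne fun e => hφTS (hv.injOn_birth hinj (hsub q hq) hφl e ▸ hq)
  have hψsh := hv.isShallow_cancelList_append hinj hTS hSrest
  exact (hψsh.2.1 φ.1 (by rw [hEW]; exact one_ne_zero)).not_gt hψφ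

def LC.op (L : LC C) : LC C where
  cells := L.cells
  dim c := -L.dim c
  bd x y := L.bd y x
  bd_mem x y h := (L.bd_mem y x h).symm
  bd_dim x y h := by linarith [L.bd_dim y x h]
  bd_sq x z := by simpa only [mul_comm] using L.bd_sq z x

section Op

variable {L : LC C} {f : C → ℝ}

@[simp] lemma LC.op_cells : L.op.cells = L.cells := rfl

@[simp] lemma LC.op_bd (x y : C) : L.op.bd x y = L.bd y x := rfl

lemma cancel_op (s t : C) : cancel L.op t s = (cancel L s t).op := by
  by_cases hst : L.bd s t = 1
  · have hst' : L.op.bd t s = 1 := hst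
    apply LC.ext
    · rw [cancel_cells hst', LC.op_cells, LC.op_cells, cancel_cells hst, Finset.pair_comm]
    · funext c
      rw [cancel_dim hst']
      exact congrArg Neg.neg (congrFun (cancel_dim hst) c).symm
    · funext x y
      simp only [LC.op_bd, cancel_bd hst, cancel_bd hst', cancelBd, LC.op_cells,
        Finset.pair_comm t s, and_comm]
      split_ifs <;> ring
  · have hst' : ¬L.op.bd t s = 1 := hst
    rw [cancel, dif_neg hst', cancel, dif_neg hst]

lemma cancelList_op (l : List (C × C)) :
    cancelList L.op (l.map Prod.swap) = (cancelList L l).op := by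
  induction l generalizing L with
  | nil => rfl
  | cons p ps ih => exact (congrArg (cancelList · _) (cancel_op p.1 p.2)).trans ih

lemma IsShallow.op {s t : C} (h : IsShallow L f s t) : IsShallow L.op (fun c => -f c) t s :=
  ⟨h.1, fun x hx => neg_le_neg (h.2.2 x hx), fun y hy => neg_le_neg (h.2.1 y hy)⟩

lemma IsShallowSeq.op {l : List (C × C)} (hv : IsShallowSeq f L l) :
    IsShallowSeq (fun c => -f c) L.op (l.map Prod.swap) := by
  induction l generalizing L with
  | nil => trivial
  | cons p ps ih => exact ⟨hv.1.op, cancel_op p.1 p.2 ▸ ih hv.2⟩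

end Op

lemma cancelList_bd_ne_one_of_precedes_death {L : LC C} {f : C → ℝ}
    (hinj : Set.InjOn f L.cells) {T rest : List (C × C)} {φ ψ : C × C}
    (hv : IsShallowSeq f L (T ++ ψ :: rest)) (hφ : φ ∈ rest) {P : List (C × C)}
    (hP : P.Pairwise fun a b => f a.2 < f b.2)
    (hPmem : ∀ χ, χ ∈ P ↔ χ ∈ T ++ ψ :: rest ∧ f χ.2 < f φ.2) :
    (cancelList L P).bd ψ.1 φ.2 ≠ 1 := by
  have h := cancelList_bd_ne_one_of_precedes (L := L.op) (f := fun c => -f c)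
    (neg_injective.comp_injOn hinj) (by simpa only [List.map_append, List.map_cons] using hv.op)
    (List.mem_map_of_mem (f := Prod.swap) hφ) (P := P.map Prod.swap)
    (List.pairwise_map.mpr (hP.imp neg_lt_neg)) fun ⟨a, b⟩ => by
      rw [← List.map_cons, ← List.map_append, List.mem_map_swap, List.mem_map_swap, hPmem]
      exact and_congr_right' neg_lt_neg_iff.symm
  rwa [cancelList_op] at h

section Enumeration

variable {α : Type*}

lemma exists_ofFn_eq_append_cons {n : ℕ} (E : Fin n → α) {i j : Fin n} (hji : j < i) :
    ∃ T rest : List α, List.ofFn E = T ++ E j :: rest ∧ E i ∈ rest := by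
  have hj : (j : ℕ) < (List.ofFn E).length := by simp
  refine ⟨(List.ofFn E).take j, (List.ofFn E).drop (j + 1), ?_, ?_⟩
  · conv_lhs => rw [← List.take_append_drop j (List.ofFn E)]
    rw [List.drop_eq_getElem_cons hj, List.getElem_ofFn]
  · refine List.mem_drop_iff_getElem.mpr ⟨i - (j + 1), by simp; omega, ?_⟩
    rw [List.getElem_ofFn]
    exact congrArg E (Fin.ext (by simp only; omega))

variable {s : Finset α} {E : Fin s.card → α}

lemma mem_ofFn_iff_of_injective (hinj : Function.Injective E) (hmem : ∀ i, E i ∈ s) {x : α} :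
    x ∈ List.ofFn E ↔ x ∈ s := by
  refine ⟨fun hx => ?_, fun hx => ?_⟩
  · obtain ⟨i, rfl⟩ := List.mem_ofFn.mp hx
    exact hmem i
  · have hbij : Function.Bijective fun i => (⟨E i, hmem i⟩ : s) :=
      (Fintype.bijective_iff_injective_and_card _).mpr
        ⟨fun i j h => hinj (congrArg Subtype.val h), by simp⟩
    obtain ⟨i, hi⟩ := hbij.2 ⟨x, hx⟩
    exact List.mem_ofFn.mpr ⟨i, congrArg Subtype.val hi⟩

lemma mem_take_ofFn_iff {β : Type*} [LinearOrder β] (hinj : Function.Injective E)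
    (hmem : ∀ i, E i ∈ s) {g : α → β} (hg : StrictMono (g ∘ E)) (i : Fin s.card) {x : α} :
    x ∈ (List.ofFn E).take i ↔ x ∈ s ∧ g x < g (E i) := by
  rw [List.mem_take_iff_getElem]
  constructor
  · rintro ⟨k, hk, rfl⟩
    rw [List.getElem_ofFn]
    exact ⟨hmem _, hg (Fin.lt_def.mpr (lt_min_iff.mp hk).1)⟩
  · rintro ⟨hx, hlt⟩
    obtain ⟨k, rfl⟩ := List.mem_ofFn.mp ((mem_ofFn_iff_of_injective hinj hmem).mpr hx)
    exact ⟨k, by simpa using hg.lt_iff_lt.mp hlt, by simp⟩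

lemma pairwise_take_ofFn {β : Type*} [LinearOrder β] {g : α → β} (hg : StrictMono (g ∘ E))
    (i : ℕ) : ((List.ofFn E).take i).Pairwise fun a b => g a < g b :=
  ((List.pairwise_ofFn (R := fun a b => g a < g b)).mpr fun _ _ h => hg h).sublist
    (List.take_sublist _ _)

end Enumeration

section ShallowOrder

variable {L : LC C} {f : C → ℝ}

lemma isShallowSeq_of_forall_take {M : LC C} {l : List (C × C)}
    (h : ∀ k (hk : k < l.length), IsShallow (cancelList M (l.take k)) f l[k].1 l[k].2) :
    IsShallowSeq f M l := by
  induction l generalizing M with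
  | nil => trivial
  | cons p ps ih =>
    exact ⟨h 0 (by simp), ih fun k hk => h (k + 1) (by simpa using hk)⟩

lemma IsShallowOrder.isShallowSeq {n : ℕ} {Φ : Fin n → C × C} (h : IsShallowOrder L f Φ) :
    IsShallowSeq f L (List.ofFn Φ) :=
  isShallowSeq_of_forall_take fun k hk => by
    simpa [quotAt, List.getElem_ofFn] using h.2.2 ⟨k, by simpa using hk⟩

lemma depthRel_of_forall_not_precedes {φ ψ : C × C} (hφ : φ ∈ BD L f) (hψ : ψ ∈ BD L f)
    (hne : φ ≠ ψ) (h : ∀ T rest, IsShallowSeq f L (T ++ ψ :: rest) →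
      (∀ χ, χ ∈ T ++ ψ :: rest ↔ χ ∈ BD L f) → φ ∉ rest) :
    DepthRel L f φ ψ := by
  refine ⟨hφ, hψ, fun Φ hΦ i j hi hj => lt_of_not_ge fun hji => ?_⟩
  obtain ⟨T, rest, hsplit, hφr⟩ :=
    exists_ofFn_eq_append_cons Φ (hji.lt_of_ne fun e => hne (hi ▸ hj ▸ congrArg Φ e.symm))
  rw [hj] at hsplit
  rw [hi] at hφr
  exact h T rest (hsplit ▸ hΦ.isShallowSeq)
    (fun χ => hsplit ▸ mem_ofFn_iff_of_injective hΦ.1 hΦ.2.1) hφr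

end ShallowOrder

/-- **Relations from book-keeping.** Let `Α` order `BD(f)` by
strictly decreasing birth value and `Ω` by strictly increasing death value.
(i) If `φ` is the next pair of `Α` after canceling a prefix of `Α` and the
current boundary entry `∂'(b_φ, d_ψ)` is `1`, then `(φ, ψ) ∈ Depth(f)`.
(ii) If `φ` is the next pair of `Ω` after canceling a prefix of `Ω` and the
current boundary entry `∂''(b_ψ, d_φ)` is `1`, then `(φ, ψ) ∈ Depth(f)`. -/
theorem bookkeeping_relations_in_depth (L : LC C) (f : C → ℝ)
    (hf : IsFilter L f)
    (A : Fin (BD L f).card → C × C)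
    (hAinj : Function.Injective A) (hAmem : ∀ i, A i ∈ BD L f)
    (hAord : ∀ i j : Fin (BD L f).card, i < j → f (A j).1 < f (A i).1)
    (O : Fin (BD L f).card → C × C)
    (hOinj : Function.Injective O) (hOmem : ∀ i, O i ∈ BD L f)
    (hOord : ∀ i j : Fin (BD L f).card, i < j → f (O i).2 < f (O j).2)
    (φ ψ : C × C) (hφ : φ ∈ BD L f) (hψ : ψ ∈ BD L f) (hne : φ ≠ ψ) :
    (∀ i : Fin (BD L f).card, A i = φ →
      (quotAt L A (i : ℕ)).bd φ.1 ψ.2 = 1 → DepthRel L f φ ψ) ∧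
    (∀ j : Fin (BD L f).card, O j = φ →
      (quotAt L O (j : ℕ)).bd ψ.1 φ.2 = 1 → DepthRel L f φ ψ) := by
  have hinj : Set.InjOn f L.cells := fun x hx y hy => hf.1 x hx y hy
  refine ⟨fun i hAi E => depthRel_of_forall_not_precedes hφ hψ hne fun T rest hv hBD hφr => ?_,
    fun j hOj E => depthRel_of_forall_not_precedes hφ hψ hne fun T rest hv hBD hφr => ?_⟩
  · have hA : StrictMono ((fun χ : C × C => -f χ.1) ∘ A) := fun a b h => neg_lt_neg (hAord a b h)
    refine cancelList_bd_ne_one_of_precedes hinj hv hφr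
      ((pairwise_take_ofFn hA i).imp neg_lt_neg_iff.mp) (fun χ => ?_) E
    rw [mem_take_ofFn_iff hAinj hAmem hA, hAi, neg_lt_neg_iff, hBD]
  · have hO : StrictMono ((fun χ : C × C => f χ.2) ∘ O) := hOord
    refine cancelList_bd_ne_one_of_precedes_death hinj hv hφr (pairwise_take_ofFn hO j)
      (fun χ => ?_) E
    rw [mem_take_ofFn_iff hOinj hOmem hO, hOj, hBD]
end
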